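/- At fixed class priors, the balanced accuracy and the informedness are affine functions of a single ranking score: on the sample space Ω = {tn, fp, fn, tp} with satisfaction S(tn) = S(tp) = 1 and S(fp) = S(fn) = 0, let π₋ > 0 and π₊ > 0 with π₋ + π₊ = 1, and define the importance I by I(tn) = I(fp) = π₊ and I(fn) = I(tp) = π₋. Then every performance p with p(tn) + p(fp) = π₋ and p(fn) + p(tp) = π₊ belongs to dom(R_I), and the balanced accuracy BA(p) = (p(tn)/π₋ + p(tp)/π₊)/2 satisfies BA(p) = R_I(p), while the informedness J(p) = p(tn)/π₋ + p(tp)/π₊ − 1 satisfies J(p) = 2·R_I(p) − 1. -/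

import Mathlib

/-- The four outcomes of two-class crisp classification. -/
inductive Outcome : Type
  | tn | fp | fn | tp
  deriving DecidableEq

instance : Fintype Outcome :=
  ⟨{Outcome.tn, Outcome.fp, Outcome.fn, Outcome.tp}, fun x => by cases x <;> simp⟩

/-- A performance on a finite sample space: nonnegative and summing to one. -/
def IsPerformance {Ω : Type*} [Fintype Ω] (p : Ω → ℝ) : Prop :=
  (∀ ω, 0 ≤ p ω) ∧ ∑ ω, p ω = 1

/-- An importance: nonnegative and nonzero. -/
def IsImportance {Ω : Type*} [Fintype Ω] (I : Ω → ℝ) : Prop :=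
  (∀ ω, 0 ≤ I ω) ∧ ∃ ω, 0 < I ω

/-- The ranking score with importance `I` and satisfaction `S`. -/
noncomputable def rankingScore {Ω : Type*} [Fintype Ω] (I S p : Ω → ℝ) : ℝ :=
  (∑ ω, I ω * S ω * p ω) / (∑ ω, I ω * p ω)

/-- The satisfaction for two-class crisp classification: 1 on correct results,
0 on incorrect ones. -/
def Ssat : Outcome → ℝ
  | .tn => 1
  | .fp => 0
  | .fn => 0
  | .tp => 1

/-- The importance giving the balanced accuracy at fixed class priors
`π₋` (negative) and `π₊` (positive). -/
def Iprior (πneg πpos : ℝ) : Outcome → ℝ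
  | .tn => πpos
  | .fp => πpos
  | .fn => πneg
  | .tp => πneg

/-! The importance `Iprior π₋ π₊` weighs each negative outcome by `π₊` and each positive one
by `π₋`, so at priors `π₋, π₊` its total mass is `2 π₋ π₊ ≠ 0`, while the weighted mass of the
correct outcomes is `π₊ p(tn) + π₋ p(tp)`. Dividing gives `(p(tn)/π₋ + p(tp)/π₊)/2`, the
balanced accuracy, and informedness is `2 BA - 1`. -/

theorem Outcome.sum_univ {M : Type*} [AddCommMonoid M] (f : Outcome → M) :
    ∑ ω, f ω = f .tn + f .fp + f .fn + f .tp := by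
  simp [Finset.univ, Fintype.elems, add_assoc]

theorem sum_Iprior_mul (πneg πpos : ℝ) (p : Outcome → ℝ) :
    ∑ ω, Iprior πneg πpos ω * p ω =
      πpos * (p .tn + p .fp) + πneg * (p .fn + p .tp) := by
  rw [Outcome.sum_univ]
  simp only [Iprior]
  ring

theorem sum_Iprior_mul_Ssat_mul (πneg πpos : ℝ) (p : Outcome → ℝ) :
    ∑ ω, Iprior πneg πpos ω * Ssat ω * p ω = πpos * p .tn + πneg * p .tp := by
  rw [Outcome.sum_univ]
  simp only [Iprior, Ssat]
  ring

theorem sum_Iprior_mul_of_priors {πneg πpos : ℝ} {p : Outcome → ℝ}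
    (hprior_neg : p .tn + p .fp = πneg) (hprior_pos : p .fn + p .tp = πpos) :
    ∑ ω, Iprior πneg πpos ω * p ω = 2 * (πneg * πpos) := by
  rw [sum_Iprior_mul, hprior_neg, hprior_pos]
  ring

theorem rankingScore_Iprior_Ssat {πneg πpos : ℝ} (hneg : πneg ≠ 0) (hpos : πpos ≠ 0)
    {p : Outcome → ℝ} (hprior_neg : p .tn + p .fp = πneg)
    (hprior_pos : p .fn + p .tp = πpos) :
    rankingScore (Iprior πneg πpos) Ssat p = (p .tn / πneg + p .tp / πpos) / 2 := by
  rw [rankingScore, sum_Iprior_mul_of_priors hprior_neg hprior_pos, sum_Iprior_mul_Ssat_mul]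
  field_simp

theorem stmt19_general (πneg πpos : ℝ) (hneg : 0 < πneg) (hpos : 0 < πpos)
    (p : Outcome → ℝ)
    (hprior_neg : p Outcome.tn + p Outcome.fp = πneg)
    (hprior_pos : p Outcome.fn + p Outcome.tp = πpos) :
    (∑ ω, Iprior πneg πpos ω * p ω ≠ 0) ∧
    (p Outcome.tn / πneg + p Outcome.tp / πpos) / 2 =
      rankingScore (Iprior πneg πpos) Ssat p ∧
    p Outcome.tn / πneg + p Outcome.tp / πpos - 1 =
      2 * rankingScore (Iprior πneg πpos) Ssat p - 1 := by
  have hR := rankingScore_Iprior_Ssat hneg.ne' hpos.ne' hprior_neg hprior_pos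
  refine ⟨?_, hR.symm, by rw [hR]; ring⟩
  rw [sum_Iprior_mul_of_priors hprior_neg hprior_pos]
  positivity

theorem stmt19 (πneg πpos : ℝ) (hneg : 0 < πneg) (hpos : 0 < πpos)
    (hsum : πneg + πpos = 1)
    (p : Outcome → ℝ) (hp : IsPerformance p)
    (hprior_neg : p Outcome.tn + p Outcome.fp = πneg)
    (hprior_pos : p Outcome.fn + p Outcome.tp = πpos) :
    (∑ ω, Iprior πneg πpos ω * p ω ≠ 0) ∧
    (p Outcome.tn / πneg + p Outcome.tp / πpos) / 2 =
      rankingScore (Iprior πneg πpos) Ssat p ∧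
    p Outcome.tn / πneg + p Outcome.tp / πpos - 1 =
      2 * rankingScore (Iprior πneg πpos) Ssat p - 1 :=
  stmt19_general πneg πpos hneg hpos p hprior_neg hprior_pos
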